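/- arXiv:1804.09491 — 2 statements merged into one kernel-verified Lean document; each statement's English description precedes it below -/
import Mathlib

section
/- The matrix B₁ of the diffuse-interface linear elasticity model is diagonalizable over ℝ: there exists an invertible 13×13 matrix R (given explicitly in the paper) such that B₁ = R Λ R⁻¹ with Λ = diag(−c_p, −c_s, −c_s, 0, 0, 0, 0, 0, 0, 0, c_s, c_s, c_p); hence the system is hyperbolic. -/
set_option maxHeartbeats 2000000

noncomputable def B1 (lam mu rho al u v w sxx sxy sxz : ℝ) :
    Matrix (Fin 13) (Fin 13) ℝ :=
  Matrix.of fun i j =>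
    if i = 0 ∧ j = 6 then -(lam + 2 * mu) / al
    else if (i = 1 ∨ i = 2) ∧ j = 6 then -lam / al
    else if i = 3 ∧ j = 7 then -mu / al
    else if i = 5 ∧ j = 8 then -mu / al
    else if i = 6 ∧ j = 0 then -al / rho
    else if i = 7 ∧ j = 3 then -al / rho
    else if i = 8 ∧ j = 5 then -al / rho
    else if i = 0 ∧ j = 12 then (lam + 2 * mu) * u / al
    else if (i = 1 ∨ i = 2) ∧ j = 12 then lam * u / al
    else if i = 3 ∧ j = 12 then mu * v / al
    else if i = 5 ∧ j = 12 then mu * w / al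
    else if i = 6 ∧ j = 12 then -sxx / rho
    else if i = 7 ∧ j = 12 then -sxy / rho
    else if i = 8 ∧ j = 12 then -sxz / rho
    else 0

@[simp]
lemma Matrix.cons_val_n5 {α : Type*} {m : ℕ} (x : α) (u : Fin (m.succ.succ.succ.succ.succ) → α) :
    Matrix.vecCons x u 5 = Matrix.vecHead (vecTail (vecTail (vecTail (vecTail u)))) :=
  rfl

@[simp]
lemma Matrix.cons_val_n6 {α : Type*} {m : ℕ} (x : α) (u : Fin (m.succ.succ.succ.succ.succ.succ) → α) :
    Matrix.vecCons x u 6 = Matrix.vecHead (vecTail (vecTail (vecTail (vecTail (vecTail u))))) :=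
  rfl

@[simp]
lemma Matrix.cons_val_n7 {α : Type*} {m : ℕ} (x : α) (u : Fin (m.succ.succ.succ.succ.succ.succ.succ) → α) :
    Matrix.vecCons x u 7 = Matrix.vecHead (vecTail (vecTail (vecTail (vecTail (vecTail (vecTail u)))))) :=
  rfl

@[simp]
lemma Matrix.cons_val_n8 {α : Type*} {m : ℕ} (x : α) (u : Fin (m.succ.succ.succ.succ.succ.succ.succ.succ) → α) :
    Matrix.vecCons x u 8 = Matrix.vecHead (vecTail (vecTail (vecTail (vecTail (vecTail (vecTail (vecTail u))))))) :=
  rfl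

@[simp]
lemma Matrix.cons_val_n9 {α : Type*} {m : ℕ} (x : α) (u : Fin (m.succ.succ.succ.succ.succ.succ.succ.succ.succ) → α) :
    Matrix.vecCons x u 9 = Matrix.vecHead (vecTail (vecTail (vecTail (vecTail (vecTail (vecTail (vecTail (vecTail u)))))))) :=
  rfl

@[simp]
lemma Matrix.cons_val_n10 {α : Type*} {m : ℕ} (x : α) (u : Fin (m.succ.succ.succ.succ.succ.succ.succ.succ.succ.succ) → α) :
    Matrix.vecCons x u 10 = Matrix.vecHead (vecTail (vecTail (vecTail (vecTail (vecTail (vecTail (vecTail (vecTail (vecTail u))))))))) :=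
  rfl

@[simp]
lemma Matrix.cons_val_n11 {α : Type*} {m : ℕ} (x : α) (u : Fin (m.succ.succ.succ.succ.succ.succ.succ.succ.succ.succ.succ) → α) :
    Matrix.vecCons x u 11 = Matrix.vecHead (vecTail (vecTail (vecTail (vecTail (vecTail (vecTail (vecTail (vecTail (vecTail (vecTail u)))))))))) :=
  rfl

@[simp]
lemma Matrix.cons_val_n12 {α : Type*} {m : ℕ} (x : α) (u : Fin (m.succ.succ.succ.succ.succ.succ.succ.succ.succ.succ.succ.succ) → α) :
    Matrix.vecCons x u 12 = Matrix.vecHead (vecTail (vecTail (vecTail (vecTail (vecTail (vecTail (vecTail (vecTail (vecTail (vecTail (vecTail u))))))))))) :=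
  rfl

noncomputable def Rmat (lam mu al u v w sxx sxy sxz c_p c_s : ℝ) :
    Matrix (Fin 13) (Fin 13) ℝ :=
  !![(lam + 2*mu), 0, 0, 0, 0, 0, 0, 0, 0, -sxx, 0, 0, (lam + 2*mu);
     lam, 0, 0, 1, 0, 0, 0, 0, 0, 0, 0, 0, lam;
     lam, 0, 0, 0, 1, 0, 0, 0, 0, 0, 0, 0, lam;
     0, mu, 0, 0, 0, 0, 0, 0, 0, -sxy, mu, 0, 0;
     0, 0, 0, 0, 0, 1, 0, 0, 0, 0, 0, 0, 0;
     0, 0, mu, 0, 0, 0, 0, 0, 0, -sxz, 0, mu, 0;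
     al*c_p, 0, 0, 0, 0, 0, 0, 0, 0, al*u, 0, 0, -(al*c_p);
     0, al*c_s, 0, 0, 0, 0, 0, 0, 0, al*v, -(al*c_s), 0, 0;
     0, 0, al*c_s, 0, 0, 0, 0, 0, 0, al*w, 0, -(al*c_s), 0;
     0, 0, 0, 0, 0, 0, 1, 0, 0, 0, 0, 0, 0;
     0, 0, 0, 0, 0, 0, 0, 1, 0, 0, 0, 0, 0;
     0, 0, 0, 0, 0, 0, 0, 0, 1, 0, 0, 0, 0;
     0, 0, 0, 0, 0, 0, 0, 0, 0, al, 0, 0, 0]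

noncomputable def Smat (lam mu al u v w sxx sxy sxz c_p c_s : ℝ) :
    Matrix (Fin 13) (Fin 13) ℝ :=
  !![1/(2*(lam + 2*mu)), 0, 0, 0, 0, 0, 1/(2*(al*c_p)), 0, 0, 0, 0, 0, sxx/(2*((lam + 2*mu)*al)) - u/(2*(al*c_p));
     0, 0, 0, 1/(2*mu), 0, 0, 0, 1/(2*(al*c_s)), 0, 0, 0, 0, sxy/(2*(mu*al)) - v/(2*(al*c_s));
     0, 0, 0, 0, 0, 1/(2*mu), 0, 0, 1/(2*(al*c_s)), 0, 0, 0, sxz/(2*(mu*al)) - w/(2*(al*c_s));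
     -(lam/(lam + 2*mu)), 1, 0, 0, 0, 0, 0, 0, 0, 0, 0, 0, -(lam*sxx/((lam + 2*mu)*al));
     -(lam/(lam + 2*mu)), 0, 1, 0, 0, 0, 0, 0, 0, 0, 0, 0, -(lam*sxx/((lam + 2*mu)*al));
     0, 0, 0, 0, 1, 0, 0, 0, 0, 0, 0, 0, 0;
     0, 0, 0, 0, 0, 0, 0, 0, 0, 1, 0, 0, 0;
     0, 0, 0, 0, 0, 0, 0, 0, 0, 0, 1, 0, 0;
     0, 0, 0, 0, 0, 0, 0, 0, 0, 0, 0, 1, 0;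
     0, 0, 0, 0, 0, 0, 0, 0, 0, 0, 0, 0, 1/al;
     0, 0, 0, 1/(2*mu), 0, 0, 0, -(1/(2*(al*c_s))), 0, 0, 0, 0, sxy/(2*(mu*al)) + v/(2*(al*c_s));
     0, 0, 0, 0, 0, 1/(2*mu), 0, 0, -(1/(2*(al*c_s))), 0, 0, 0, sxz/(2*(mu*al)) + w/(2*(al*c_s));
     1/(2*(lam + 2*mu)), 0, 0, 0, 0, 0, -(1/(2*(al*c_p))), 0, 0, 0, 0, 0, sxx/(2*((lam + 2*mu)*al)) + u/(2*(al*c_p))]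

lemma RS_row0 (lam mu al u v w sxx sxy sxz c_p c_s : ℝ)
    (hal0 : al ≠ 0) (hmu0 : mu ≠ 0) (hL0 : lam + 2*mu ≠ 0) (hcp0 : c_p ≠ 0)
    (hcs0 : c_s ≠ 0) : ∀ j,
    (Rmat lam mu al u v w sxx sxy sxz c_p c_s * Smat lam mu al u v w sxx sxy sxz c_p c_s) 0 j
      = (1 : Matrix (Fin 13) (Fin 13) ℝ) 0 j := by
  intro j
  fin_cases j <;>
    simp [Rmat, Smat, Matrix.mul_apply, Fin.sum_univ_succ, Matrix.one_apply] <;>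
    (try field_simp) <;> (try ring)

lemma RS_row1 (lam mu al u v w sxx sxy sxz c_p c_s : ℝ)
    (hal0 : al ≠ 0) (hmu0 : mu ≠ 0) (hL0 : lam + 2*mu ≠ 0) (hcp0 : c_p ≠ 0)
    (hcs0 : c_s ≠ 0) : ∀ j,
    (Rmat lam mu al u v w sxx sxy sxz c_p c_s * Smat lam mu al u v w sxx sxy sxz c_p c_s) 1 j
      = (1 : Matrix (Fin 13) (Fin 13) ℝ) 1 j := by
  intro j
  fin_cases j <;>
    simp [Rmat, Smat, Matrix.mul_apply, Fin.sum_univ_succ, Matrix.one_apply] <;>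
    (try field_simp) <;> (try ring)

lemma RS_row2 (lam mu al u v w sxx sxy sxz c_p c_s : ℝ)
    (hal0 : al ≠ 0) (hmu0 : mu ≠ 0) (hL0 : lam + 2*mu ≠ 0) (hcp0 : c_p ≠ 0)
    (hcs0 : c_s ≠ 0) : ∀ j,
    (Rmat lam mu al u v w sxx sxy sxz c_p c_s * Smat lam mu al u v w sxx sxy sxz c_p c_s) 2 j
      = (1 : Matrix (Fin 13) (Fin 13) ℝ) 2 j := by
  intro j
  fin_cases j <;>
    simp [Rmat, Smat, Matrix.mul_apply, Fin.sum_univ_succ, Matrix.one_apply] <;>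
    (try field_simp) <;> (try ring)

lemma RS_row3 (lam mu al u v w sxx sxy sxz c_p c_s : ℝ)
    (hal0 : al ≠ 0) (hmu0 : mu ≠ 0) (hL0 : lam + 2*mu ≠ 0) (hcp0 : c_p ≠ 0)
    (hcs0 : c_s ≠ 0) : ∀ j,
    (Rmat lam mu al u v w sxx sxy sxz c_p c_s * Smat lam mu al u v w sxx sxy sxz c_p c_s) 3 j
      = (1 : Matrix (Fin 13) (Fin 13) ℝ) 3 j := by
  intro j
  fin_cases j <;>
    simp [Rmat, Smat, Matrix.mul_apply, Fin.sum_univ_succ, Matrix.one_apply] <;>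
    (try field_simp) <;> (try ring)

lemma RS_row4 (lam mu al u v w sxx sxy sxz c_p c_s : ℝ)
    (hal0 : al ≠ 0) (hmu0 : mu ≠ 0) (hL0 : lam + 2*mu ≠ 0) (hcp0 : c_p ≠ 0)
    (hcs0 : c_s ≠ 0) : ∀ j,
    (Rmat lam mu al u v w sxx sxy sxz c_p c_s * Smat lam mu al u v w sxx sxy sxz c_p c_s) 4 j
      = (1 : Matrix (Fin 13) (Fin 13) ℝ) 4 j := by
  intro j
  fin_cases j <;>
    simp [Rmat, Smat, Matrix.mul_apply, Fin.sum_univ_succ, Matrix.one_apply] <;>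
    (try field_simp) <;> (try ring)

lemma RS_row5 (lam mu al u v w sxx sxy sxz c_p c_s : ℝ)
    (hal0 : al ≠ 0) (hmu0 : mu ≠ 0) (hL0 : lam + 2*mu ≠ 0) (hcp0 : c_p ≠ 0)
    (hcs0 : c_s ≠ 0) : ∀ j,
    (Rmat lam mu al u v w sxx sxy sxz c_p c_s * Smat lam mu al u v w sxx sxy sxz c_p c_s) 5 j
      = (1 : Matrix (Fin 13) (Fin 13) ℝ) 5 j := by
  intro j
  fin_cases j <;>
    simp [Rmat, Smat, Matrix.mul_apply, Fin.sum_univ_succ, Matrix.one_apply] <;>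
    (try field_simp) <;> (try ring)

lemma RS_row6 (lam mu al u v w sxx sxy sxz c_p c_s : ℝ)
    (hal0 : al ≠ 0) (hmu0 : mu ≠ 0) (hL0 : lam + 2*mu ≠ 0) (hcp0 : c_p ≠ 0)
    (hcs0 : c_s ≠ 0) : ∀ j,
    (Rmat lam mu al u v w sxx sxy sxz c_p c_s * Smat lam mu al u v w sxx sxy sxz c_p c_s) 6 j
      = (1 : Matrix (Fin 13) (Fin 13) ℝ) 6 j := by
  intro j
  fin_cases j <;>
    simp [Rmat, Smat, Matrix.mul_apply, Fin.sum_univ_succ, Matrix.one_apply] <;>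
    (try field_simp) <;> (try ring)

lemma RS_row7 (lam mu al u v w sxx sxy sxz c_p c_s : ℝ)
    (hal0 : al ≠ 0) (hmu0 : mu ≠ 0) (hL0 : lam + 2*mu ≠ 0) (hcp0 : c_p ≠ 0)
    (hcs0 : c_s ≠ 0) : ∀ j,
    (Rmat lam mu al u v w sxx sxy sxz c_p c_s * Smat lam mu al u v w sxx sxy sxz c_p c_s) 7 j
      = (1 : Matrix (Fin 13) (Fin 13) ℝ) 7 j := by
  intro j
  fin_cases j <;>
    simp [Rmat, Smat, Matrix.mul_apply, Fin.sum_univ_succ, Matrix.one_apply] <;>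
    (try field_simp) <;> (try ring)

lemma RS_row8 (lam mu al u v w sxx sxy sxz c_p c_s : ℝ)
    (hal0 : al ≠ 0) (hmu0 : mu ≠ 0) (hL0 : lam + 2*mu ≠ 0) (hcp0 : c_p ≠ 0)
    (hcs0 : c_s ≠ 0) : ∀ j,
    (Rmat lam mu al u v w sxx sxy sxz c_p c_s * Smat lam mu al u v w sxx sxy sxz c_p c_s) 8 j
      = (1 : Matrix (Fin 13) (Fin 13) ℝ) 8 j := by
  intro j
  fin_cases j <;>
    simp [Rmat, Smat, Matrix.mul_apply, Fin.sum_univ_succ, Matrix.one_apply] <;>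
    (try field_simp) <;> (try ring)

lemma RS_row9 (lam mu al u v w sxx sxy sxz c_p c_s : ℝ)
    (hal0 : al ≠ 0) (hmu0 : mu ≠ 0) (hL0 : lam + 2*mu ≠ 0) (hcp0 : c_p ≠ 0)
    (hcs0 : c_s ≠ 0) : ∀ j,
    (Rmat lam mu al u v w sxx sxy sxz c_p c_s * Smat lam mu al u v w sxx sxy sxz c_p c_s) 9 j
      = (1 : Matrix (Fin 13) (Fin 13) ℝ) 9 j := by
  intro j
  fin_cases j <;>
    simp [Rmat, Smat, Matrix.mul_apply, Fin.sum_univ_succ, Matrix.one_apply] <;>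
    (try field_simp) <;> (try ring)

lemma RS_row10 (lam mu al u v w sxx sxy sxz c_p c_s : ℝ)
    (hal0 : al ≠ 0) (hmu0 : mu ≠ 0) (hL0 : lam + 2*mu ≠ 0) (hcp0 : c_p ≠ 0)
    (hcs0 : c_s ≠ 0) : ∀ j,
    (Rmat lam mu al u v w sxx sxy sxz c_p c_s * Smat lam mu al u v w sxx sxy sxz c_p c_s) 10 j
      = (1 : Matrix (Fin 13) (Fin 13) ℝ) 10 j := by
  intro j
  fin_cases j <;>
    simp [Rmat, Smat, Matrix.mul_apply, Fin.sum_univ_succ, Matrix.one_apply] <;>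
    (try field_simp) <;> (try ring)

lemma RS_row11 (lam mu al u v w sxx sxy sxz c_p c_s : ℝ)
    (hal0 : al ≠ 0) (hmu0 : mu ≠ 0) (hL0 : lam + 2*mu ≠ 0) (hcp0 : c_p ≠ 0)
    (hcs0 : c_s ≠ 0) : ∀ j,
    (Rmat lam mu al u v w sxx sxy sxz c_p c_s * Smat lam mu al u v w sxx sxy sxz c_p c_s) 11 j
      = (1 : Matrix (Fin 13) (Fin 13) ℝ) 11 j := by
  intro j
  fin_cases j <;>
    simp [Rmat, Smat, Matrix.mul_apply, Fin.sum_univ_succ, Matrix.one_apply] <;>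
    (try field_simp) <;> (try ring)

lemma RS_row12 (lam mu al u v w sxx sxy sxz c_p c_s : ℝ)
    (hal0 : al ≠ 0) (hmu0 : mu ≠ 0) (hL0 : lam + 2*mu ≠ 0) (hcp0 : c_p ≠ 0)
    (hcs0 : c_s ≠ 0) : ∀ j,
    (Rmat lam mu al u v w sxx sxy sxz c_p c_s * Smat lam mu al u v w sxx sxy sxz c_p c_s) 12 j
      = (1 : Matrix (Fin 13) (Fin 13) ℝ) 12 j := by
  intro j
  fin_cases j <;>
    simp [Rmat, Smat, Matrix.mul_apply, Fin.sum_univ_succ, Matrix.one_apply] <;>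
    (try field_simp) <;> (try ring)

lemma RS_eq_one (lam mu al u v w sxx sxy sxz c_p c_s : ℝ)
    (hal0 : al ≠ 0) (hmu0 : mu ≠ 0) (hL0 : lam + 2*mu ≠ 0) (hcp0 : c_p ≠ 0)
    (hcs0 : c_s ≠ 0) :
    Rmat lam mu al u v w sxx sxy sxz c_p c_s * Smat lam mu al u v w sxx sxy sxz c_p c_s
      = 1 := by
  ext i j
  fin_cases i
  exacts [
    RS_row0 lam mu al u v w sxx sxy sxz c_p c_s hal0 hmu0 hL0 hcp0 hcs0 j,
    RS_row1 lam mu al u v w sxx sxy sxz c_p c_s hal0 hmu0 hL0 hcp0 hcs0 j,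
    RS_row2 lam mu al u v w sxx sxy sxz c_p c_s hal0 hmu0 hL0 hcp0 hcs0 j,
    RS_row3 lam mu al u v w sxx sxy sxz c_p c_s hal0 hmu0 hL0 hcp0 hcs0 j,
    RS_row4 lam mu al u v w sxx sxy sxz c_p c_s hal0 hmu0 hL0 hcp0 hcs0 j,
    RS_row5 lam mu al u v w sxx sxy sxz c_p c_s hal0 hmu0 hL0 hcp0 hcs0 j,
    RS_row6 lam mu al u v w sxx sxy sxz c_p c_s hal0 hmu0 hL0 hcp0 hcs0 j,
    RS_row7 lam mu al u v w sxx sxy sxz c_p c_s hal0 hmu0 hL0 hcp0 hcs0 j,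
    RS_row8 lam mu al u v w sxx sxy sxz c_p c_s hal0 hmu0 hL0 hcp0 hcs0 j,
    RS_row9 lam mu al u v w sxx sxy sxz c_p c_s hal0 hmu0 hL0 hcp0 hcs0 j,
    RS_row10 lam mu al u v w sxx sxy sxz c_p c_s hal0 hmu0 hL0 hcp0 hcs0 j,
    RS_row11 lam mu al u v w sxx sxy sxz c_p c_s hal0 hmu0 hL0 hcp0 hcs0 j,
    RS_row12 lam mu al u v w sxx sxy sxz c_p c_s hal0 hmu0 hL0 hcp0 hcs0 j]

lemma BR_eq_RD (lam mu rho al u v w sxx sxy sxz c_p c_s : ℝ)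
    (hal0 : al ≠ 0) (hrho0 : rho ≠ 0)
    (hcp2 : c_p * c_p = (lam + 2 * mu) / rho) (hcs2 : c_s * c_s = mu / rho) :
    B1 lam mu rho al u v w sxx sxy sxz * Rmat lam mu al u v w sxx sxy sxz c_p c_s
      = Rmat lam mu al u v w sxx sxy sxz c_p c_s *
        Matrix.diagonal ![-c_p, -c_s, -c_s, 0, 0, 0, 0, 0, 0, 0, c_s, c_s, c_p] := by
  have hcs2' : mu = c_s * c_s * rho := by rw [hcs2]; field_simp
  have hcp2' : lam = c_p * c_p * rho - 2 * (c_s * c_s * rho) := by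
    rw [hcp2, hcs2]; field_simp; try ring
  ext i j
  fin_cases i <;> fin_cases j <;>
    simp (config := { decide := true }) [B1, Rmat, Matrix.mul_apply, Matrix.mul_diagonal,
      Matrix.diagonal_apply, Fin.sum_univ_succ, hcp2', hcs2'] <;>
    (try field_simp) <;> (try ring)

theorem stmt_5 (lam mu rho al u v w sxx sxy sxz : ℝ)
    (hlam : 0 < lam) (hmu : 0 < mu) (hrho : 0 < rho) (hal : al ∈ Set.Ioc (0 : ℝ) 1)
    (c_p c_s : ℝ) (hcp : c_p = Real.sqrt ((lam + 2 * mu) / rho))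
    (hcs : c_s = Real.sqrt (mu / rho)) :
    ∃ R : Matrix (Fin 13) (Fin 13) ℝ, IsUnit R.det ∧
      B1 lam mu rho al u v w sxx sxy sxz =
        R * Matrix.diagonal
          ![-c_p, -c_s, -c_s, 0, 0, 0, 0, 0, 0, 0, c_s, c_s, c_p] * R⁻¹ := by
  have hal0 : al ≠ 0 := ne_of_gt hal.1
  have hrho0 : rho ≠ 0 := ne_of_gt hrho
  have hL0 : lam + 2*mu ≠ 0 := by positivity
  have hmu0 : mu ≠ 0 := ne_of_gt hmu
  have hcp0 : c_p ≠ 0 := by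
    rw [hcp]; exact ne_of_gt (Real.sqrt_pos.mpr (by positivity))
  have hcs0 : c_s ≠ 0 := by
    rw [hcs]; exact ne_of_gt (Real.sqrt_pos.mpr (by positivity))
  have hcp2 : c_p * c_p = (lam + 2 * mu) / rho := by
    rw [hcp]; exact Real.mul_self_sqrt (by positivity)
  have hcs2 : c_s * c_s = mu / rho := by
    rw [hcs]; exact Real.mul_self_sqrt (by positivity)
  set Rm := Rmat lam mu al u v w sxx sxy sxz c_p c_s with hRm
  set Sm := Smat lam mu al u v w sxx sxy sxz c_p c_s with hSm
  have hRS : Rm * Sm = 1 := RS_eq_one lam mu al u v w sxx sxy sxz c_p c_s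
    hal0 hmu0 hL0 hcp0 hcs0
  have hdet : IsUnit Rm.det := Matrix.isUnit_det_of_right_inverse hRS
  have hinv : Rm⁻¹ = Sm := Matrix.inv_eq_right_inv hRS
  refine ⟨Rm, hdet, ?_⟩
  rw [hinv]
  have hBR := BR_eq_RD lam mu rho al u v w sxx sxy sxz c_p c_s hal0 hrho0 hcp2 hcs2
  calc B1 lam mu rho al u v w sxx sxy sxz
      = B1 lam mu rho al u v w sxx sxy sxz * (Rm * Sm) := by rw [hRS, Matrix.mul_one]
    _ = (B1 lam mu rho al u v w sxx sxy sxz * Rm) * Sm := by rw [Matrix.mul_assoc]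
    _ = Rm * Matrix.diagonal ![-c_p, -c_s, -c_s, 0, 0, 0, 0, 0, 0, 0, c_s, c_s, c_p] * Sm := by
        rw [hBR]
end

section
/- The s-wave polarization vectors δ₂ = (0, 0, 0, μ, 0, 0, 0, −c_s, 0, 0, 0, 0, 0) and δ₃ = (0, 0, 0, 0, 0, μ, 0, 0, −c_s, 0, 0, 0, 0) are right eigenvectors of B₁ (with α = 1) both with eigenvalue c_s = √(μ/ρ), and they are linearly independent; hence c_s is an eigenvalue of multiplicity at least 2. -/
set_option maxHeartbeats 1000000 in
theorem stmt_13 (lam mu rho u v w sxx sxy sxz : ℝ)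
    (hlam : 0 < lam) (hmu : 0 < mu) (hrho : 0 < rho)
    (c_s : ℝ) (hcs : c_s = Real.sqrt (mu / rho))
    (δ₂ δ₃ : Fin 13 → ℝ)
    (hδ₂ : δ₂ = ![0, 0, 0, mu, 0, 0, 0, -c_s, 0, 0, 0, 0, 0])
    (hδ₃ : δ₃ = ![0, 0, 0, 0, 0, mu, 0, 0, -c_s, 0, 0, 0, 0]) :
    (B1 lam mu rho 1 u v w sxx sxy sxz).mulVec δ₂ = c_s • δ₂ ∧
    (B1 lam mu rho 1 u v w sxx sxy sxz).mulVec δ₃ = c_s • δ₃ ∧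
    LinearIndependent ℝ ![δ₂, δ₃] := by
  have hsq : c_s * c_s = mu / rho := by
    rw [hcs]; exact Real.mul_self_sqrt (le_of_lt (div_pos hmu hrho))
  have hsq2 : c_s * c_s * rho = mu := by
    rw [hsq]; field_simp
  have key : ∀ δ : Fin 13 → ℝ, δ = ![0, 0, 0, mu, 0, 0, 0, -c_s, 0, 0, 0, 0, 0] ∨
      δ = ![0, 0, 0, 0, 0, mu, 0, 0, -c_s, 0, 0, 0, 0] →
      (B1 lam mu rho 1 u v w sxx sxy sxz).mulVec δ = c_s • δ := by
    rintro δ (rfl | rfl) <;> ext i <;> fin_cases i <;>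
      simp (config := { decide := true }) [B1, Matrix.mulVec, dotProduct,
        Fin.sum_univ_succ, Fin.ext_iff, -Fin.val_eq_zero_iff] <;>
      first
        | (rw [hsq]; ring)
        | exact Or.inr rfl
        | (show mu * c_s = c_s * mu; ring)
        | (show -1 / rho * mu = c_s * -c_s; field_simp; linarith [hsq2])
        | ring
  refine ⟨key δ₂ (Or.inl hδ₂), key δ₃ (Or.inr hδ₃), ?_⟩
  rw [LinearIndependent.pair_iff]
  intro s t hst
  rw [hδ₂, hδ₃] at hst
  have h3 := congrFun hst 3
  have h5 := congrFun hst 5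
  simp only [Pi.add_apply, Pi.smul_apply, smul_eq_mul, Pi.zero_apply] at h3 h5
  have h3' : s * mu = 0 := by
    have : s * mu + t * 0 = 0 := h3
    linarith
  have h5' : t * mu = 0 := by
    have : s * 0 + t * mu = 0 := h5
    linarith
  exact ⟨(mul_eq_zero.mp h3').resolve_right hmu.ne',
         (mul_eq_zero.mp h5').resolve_right hmu.ne'⟩
end
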